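/- With the rank-one dressing data below, D(λ)·E(λ) = I for every λ ∈ ℂ \ {k, −k, conj(k), −conj(k)}; that is, the function E(λ) of the stated form is the inverse of the dressing factor D(λ). -/

import Mathlib

open Matrix Complex ComplexConjugate

noncomputable section

abbrev M2 := Matrix (Fin 2) (Fin 2) ℂ
abbrev Vec2 := Matrix (Fin 2) (Fin 1) ℂ

def sigma3 : M2 := !![1, 0; 0, -1]
def sigma2 : M2 := !![0, -Complex.I; Complex.I, 0]

/-- α = (k|y₁|² + k̄|y₂|²)⁻¹ -/
def alph (k : ℂ) (y : Vec2) : ℂ :=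
  (k * (Complex.normSq (y 0 0) : ℂ) + conj k * (Complex.normSq (y 1 0) : ℂ))⁻¹

/-- z = ((k²−k̄²)/2)·diag(α,ᾱ)·y -/
def zvec (k : ℂ) (y : Vec2) : Vec2 :=
  ((k ^ 2 - (conj k) ^ 2) / 2) • (!![alph k y, 0; 0, conj (alph k y)] * y)

/-- B = |z⟩⟨y| -/
def Bmat (k : ℂ) (y : Vec2) : M2 := zvec k y * yᴴ

/-- D(λ) = I + B/(λ−k) − σ₃Bσ₃/(λ+k) -/
def Dfun (k : ℂ) (y : Vec2) (lam : ℂ) : M2 :=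
  1 + (lam - k)⁻¹ • Bmat k y - (lam + k)⁻¹ • (sigma3 * Bmat k y * sigma3)

/-- E(λ) = I + B†/(λ−k̄) − σ₃B†σ₃/(λ+k̄) -/
def Efun (k : ℂ) (y : Vec2) (lam : ℂ) : M2 :=
  1 + (lam - conj k)⁻¹ • (Bmat k y)ᴴ - (lam + conj k)⁻¹ • (sigma3 * (Bmat k y)ᴴ * sigma3)

/-!
Put `a = |y₁|²`, `b = |y₂|²`, `p = y₁ȳ₂`, `q = y₂ȳ₁`. Then `B` is the explicit matrix
`((k² - k̄²)/2) • [[a/S, p/S], [q/T, b/T]]` with `S = k a + k̄ b`, `T = k̄ a + k b = conj S`, and since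
`a`, `b` are real, `B†` is the same matrix with `k ↔ k̄` and `p ↔ q` swapped, transposed. So `E` is the
dressing factor built from `k̄` and `B†`, and `D(λ) E(λ) = 1` becomes an identity of rational functions
over any field in which `k̄` is an independent variable `k'`, subject only to `p q = a b`.
-/

section Field

variable {F : Type*} [Field F]

def dressingFactor (k lam : F) (B : Matrix (Fin 2) (Fin 2) F) : Matrix (Fin 2) (Fin 2) F :=
  1 + (lam - k)⁻¹ • B - (lam + k)⁻¹ • (!![1, 0; 0, -1] * B * !![1, 0; 0, -1])

theorem dressingFactor_eq (k lam : F) (B : Matrix (Fin 2) (Fin 2) F) :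
    dressingFactor k lam B =
      !![1 + ((lam - k)⁻¹ - (lam + k)⁻¹) * B 0 0, ((lam - k)⁻¹ + (lam + k)⁻¹) * B 0 1;
        ((lam - k)⁻¹ + (lam + k)⁻¹) * B 1 0, 1 + ((lam - k)⁻¹ - (lam + k)⁻¹) * B 1 1] := by
  ext i j
  fin_cases i <;> fin_cases j <;>
    simp only [dressingFactor, Fin.zero_eta, Fin.mk_one, Matrix.sub_apply, Matrix.add_apply,
      Matrix.smul_apply, Matrix.mul_apply, Fin.sum_univ_two, of_apply, cons_val_zero, cons_val_one,
      one_apply_eq, one_apply_ne, ne_eq, zero_ne_one, one_ne_zero, not_false_eq_true] <;>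
    ring

def dressingResidue (k k' a b p q : F) : Matrix (Fin 2) (Fin 2) F :=
  ((k ^ 2 - k' ^ 2) / 2) •
    !![a / (k * a + k' * b), p / (k * a + k' * b); q / (k' * a + k * b), b / (k' * a + k * b)]

theorem dressingFactor_mul_dressingFactor_transpose_eq_one [NeZero (2 : F)]
    {k k' lam a b p q : F} (hpq : p * q = a * b) (hS : k * a + k' * b ≠ 0) (hT : k' * a + k * b ≠ 0)
    (h₁ : lam ≠ k) (h₂ : lam ≠ -k) (h₃ : lam ≠ k') (h₄ : lam ≠ -k') :
    dressingFactor k lam (dressingResidue k k' a b p q) *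
      dressingFactor k' lam (dressingResidue k' k a b q p)ᵀ = 1 := by
  have h₁ : lam - k ≠ 0 := sub_ne_zero.2 h₁
  have h₂ : lam + k ≠ 0 := by rwa [← sub_neg_eq_add, sub_ne_zero]
  have h₃ : lam - k' ≠ 0 := sub_ne_zero.2 h₃
  have h₄ : lam + k' ≠ 0 := by rwa [← sub_neg_eq_add, sub_ne_zero]
  rw [dressingFactor_eq, dressingFactor_eq, mul_fin_two, one_fin_two]
  ext i j
  fin_cases i <;> fin_cases j <;>
    simp only [dressingResidue, Matrix.smul_apply, transpose_apply, of_apply, cons_val_zero,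
      cons_val_one, Fin.zero_eta, Fin.mk_one, smul_eq_mul] <;>
    field_simp
  · linear_combination (k ^ 2 - k' ^ 2) * (k' ^ 2 - k ^ 2) * (2 * lam) ^ 2 * hpq
  · ring
  · ring
  · linear_combination (k ^ 2 - k' ^ 2) * (k' ^ 2 - k ^ 2) * (2 * lam) ^ 2 * hpq

end Field

theorem Bmat_eq_dressingResidue (k : ℂ) (y : Vec2) :
    Bmat k y = dressingResidue k (conj k) (normSq (y 0 0)) (normSq (y 1 0))
      (y 0 0 * conj (y 1 0)) (y 1 0 * conj (y 0 0)) := by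
  ext i j
  fin_cases i <;> fin_cases j <;>
    simp only [Bmat, zvec, alph, dressingResidue, Fin.zero_eta, Fin.mk_one, Fin.default_eq_zero,
      Matrix.mul_apply, Matrix.smul_apply, Finset.univ_unique, Finset.sum_singleton,
      Fin.sum_univ_two, of_apply, cons_val_zero, cons_val_one, conjTranspose_apply, RCLike.star_def,
      ← mul_conj, map_inv₀, map_add, map_mul, RingHomCompTriple.comp_apply, RingHom.id_apply] <;>
    ring

theorem conjTranspose_Bmat (k : ℂ) (y : Vec2) :
    (Bmat k y)ᴴ = (dressingResidue (conj k) k (normSq (y 0 0)) (normSq (y 1 0))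
      (y 1 0 * conj (y 0 0)) (y 0 0 * conj (y 1 0)))ᵀ := by
  rw [Bmat_eq_dressingResidue]
  ext i j
  fin_cases i <;> fin_cases j <;>
    simp only [dressingResidue, Fin.zero_eta, Fin.mk_one, conjTranspose_apply, transpose_apply,
      smul_of, smul_cons, smul_eq_mul, of_apply, cons_val_zero, cons_val_one, star_mul', star_div₀,
      star_sub, star_pow, star_add, star_ofNat, RCLike.star_def, conj_conj, conj_ofReal] <;>
    ring

theorem dressing_inverse_general (k : ℂ) (y : Vec2)
    (hy : k * (Complex.normSq (y 0 0) : ℂ) + conj k * (Complex.normSq (y 1 0) : ℂ) ≠ 0) :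
    ∀ lam : ℂ, lam ≠ k → lam ≠ -k → lam ≠ conj k → lam ≠ -conj k →
      Dfun k y lam * Efun k y lam = 1 := by
  intro lam h₁ h₂ h₃ h₄
  have hy_conj : conj k * (normSq (y 0 0) : ℂ) + k * (normSq (y 1 0) : ℂ) ≠ 0 := by
    simpa using (map_ne_zero (starRingEnd ℂ)).2 hy
  have hpq : y 0 0 * conj (y 1 0) * (y 1 0 * conj (y 0 0)) =
      normSq (y 0 0) * normSq (y 1 0) := by
    rw [← mul_conj, ← mul_conj]
    ring
  show dressingFactor k lam (Bmat k y) * dressingFactor (conj k) lam (Bmat k y)ᴴ = 1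
  rw [conjTranspose_Bmat, Bmat_eq_dressingResidue]
  exact dressingFactor_mul_dressingFactor_transpose_eq_one hpq hy hy_conj h₁ h₂ h₃ h₄

/-- D(λ)·E(λ) = I away from the poles: E is the inverse of the dressing factor D. -/
theorem dressing_inverse (k : ℂ) (hre : k.re ≠ 0) (him : k.im ≠ 0) (y : Vec2)
    (hy : k * (Complex.normSq (y 0 0) : ℂ) + conj k * (Complex.normSq (y 1 0) : ℂ) ≠ 0) :
    ∀ lam : ℂ, lam ≠ k → lam ≠ -k → lam ≠ conj k → lam ≠ -conj k →
      Dfun k y lam * Efun k y lam = 1 :=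
  dressing_inverse_general k y hy
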